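/- arXiv:1606.03174 — 4 statements merged into one kernel-verified Lean document; each statement's English description precedes it below -/
import Mathlib

section
/- Let D ⊆ ℝ^d be a bounded open set with Lebesgue measure λ, and let f, g ∈ L²(D,λ) with f ≥ 0 and g ≥ 0 λ-a.e. Then there exists a measurable function f̃ : D → ℝ which is a rearrangement of f (i.e. λ({f̃ > α}) = λ({f > α}) for every α ∈ ℝ) such that ∫_D f̃ g dλ ≤ ∫_D h g dλ for every measurable function h : D → ℝ that is a rearrangement of f. -/
/-!
The minimizer is `f⋆ ∘ σ`, where `f⋆` is the decreasing rearrangement of `f` and `σ` is a rank of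
`g`: a function with `μ {σ < t} = min t (μ univ)` that is monotone in `g`. To build `σ`, the atoms
of `g` are split by an atomless `u`, which gives an atomless key `Ψ`, and `σ x = μ {Ψ ≤ Ψ x}`.
By the layer-cake formula, `∫ h g = ∫∫ μ ({s < h} ∩ {t < g}) ds dt`. The superlevel sets of
`f⋆ ∘ σ` are a.e. sublevel sets of `σ`, hence nested with `{g ≤ t}`, and among all sets of measure
`μ {s < f}` a set nested with `{g ≤ t}` has the least mass in `{t < g}`.
-/

open MeasureTheory Set Filter Topology ENNReal

section RealLine

variable {ν : Measure ℝ}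

lemma measure_Iio_le_of_forall_lt {b₀ : ℝ} {t : ℝ≥0∞} (h : ∀ b < b₀, ν (Iic b) ≤ t) :
    ν (Iio b₀) ≤ t := by
  obtain ⟨v, hv_mono, hv_lt, hv_lim⟩ := exists_seq_strictMono_tendsto b₀
  rw [← iUnion_Iic_eq_Iio_of_lt_of_tendsto hv_lt hv_lim,
    Monotone.measure_iUnion fun m n hmn => Iic_subset_Iic.2 (hv_mono.monotone hmn)]
  exact iSup_le fun n => h _ (hv_lt n)

lemma le_measure_Iic_of_forall_gt [IsFiniteMeasure ν] {b₀ : ℝ} {t : ℝ≥0∞}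
    (h : ∀ b, b₀ < b → t ≤ ν (Iic b)) : t ≤ ν (Iic b₀) := by
  obtain ⟨v, hv_anti, hv_gt, hv_lim⟩ := exists_seq_strictAnti_tendsto b₀
  have hinter : ⋂ n, Iic (v n) = Iic b₀ := by
    ext b
    simp only [mem_iInter, mem_Iic]
    exact ⟨fun hb => ge_of_tendsto' hv_lim hb, fun hb n => hb.trans (hv_gt n).le⟩
  rw [← hinter, Antitone.measure_iInter (fun m n hmn => Iic_subset_Iic.2 (hv_anti.antitone hmn))
    (fun _ => measurableSet_Iic.nullMeasurableSet) ⟨0, measure_ne_top ν _⟩]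
  exact le_iInf fun n => h _ (hv_gt n)

theorem measure_setOf_measure_Iic_lt [IsFiniteMeasure ν] [NullSingletonClass ν] (t : ℝ≥0∞) :
    ν {b | ν (Iic b) < t} = min t (ν univ) := by
  set S := {b | ν (Iic b) < t}
  have hS_lower : ∀ ⦃a b⦄, a ≤ b → b ∈ S → a ∈ S := fun a b hab hb =>
    (measure_mono (Iic_subset_Iic.2 hab)).trans_lt hb
  rcases eq_or_ne t 0 with rfl | ht0
  · simp [S]
  have hS_ne : S.Nonempty := by
    have hlim : Tendsto (fun b => ν (Iic b)) atBot (𝓝 0) := by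
      have := tendsto_measure_iInter_atBot (μ := ν) (fun b => measurableSet_Iic.nullMeasurableSet)
        (fun a b hab => Iic_subset_Iic.2 hab) ⟨0, measure_ne_top ν _⟩
      rwa [iInter_Iic_eq_empty_iff.2 (by simp), measure_empty] at this
    exact (hlim.eventually (gt_mem_nhds (pos_iff_ne_zero.2 ht0))).exists
  by_cases hS_bdd : BddAbove S
  · set b₀ := sSup S
    have hIio : Iio b₀ ⊆ S := fun b hb => by
      obtain ⟨c, hc, hbc⟩ := exists_lt_of_lt_csSup hS_ne hb
      exact hS_lower hbc.le hc
    have hIic : S ⊆ Iic b₀ := fun b hb => le_csSup hS_bdd hb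
    have hIio_eq : ν (Iio b₀) = ν (Iic b₀) := measure_congr Iio_ae_eq_Iic
    have hle : ν (Iio b₀) ≤ t := measure_Iio_le_of_forall_lt fun b hb => (hIio hb).le
    have hge : t ≤ ν (Iic b₀) := le_measure_Iic_of_forall_gt fun b hb =>
      not_lt.1 fun hbS => (hb.trans_le (le_csSup hS_bdd hbS)).false
    have hSt : ν S = t := le_antisymm ((measure_mono hIic).trans (hIio_eq ▸ hle))
      (hge.trans (hIio_eq ▸ measure_mono hIio))
    rw [hSt, min_eq_left (hSt ▸ measure_mono (subset_univ S))]
  · have hS_univ : S = univ := eq_univ_of_forall fun b => by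
      obtain ⟨c, hc, hbc⟩ := not_bddAbove_iff.1 hS_bdd b
      exact hS_lower hbc.le hc
    have hle : ν univ ≤ t := le_of_tendsto' (tendsto_measure_Iic_atTop ν) fun b =>
      (hS_univ ▸ mem_univ b : b ∈ S).le
    rw [hS_univ, min_eq_right hle]

end RealLine

section Rank

variable {X : Type*} [MeasurableSpace X] {μ : Measure X}

theorem measure_setOf_measure_le_lt [IsFiniteMeasure μ] {Ψ : X → ℝ} (hΨ : Measurable Ψ)
    (hΨ_atom : ∀ c, μ {x | Ψ x = c} = 0) (t : ℝ≥0∞) :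
    μ {x | μ {y | Ψ y ≤ Ψ x} < t} = min t (μ univ) := by
  have hν_Iic : ∀ b, μ.map Ψ (Iic b) = μ {y | Ψ y ≤ b} := fun b =>
    Measure.map_apply hΨ measurableSet_Iic
  have : NullSingletonClass (μ.map Ψ) :=
    ⟨fun c => (Measure.map_apply hΨ (measurableSet_singleton c)).trans (hΨ_atom c)⟩
  have hmono : Monotone fun b => μ.map Ψ (Iic b) := fun a b hab =>
    measure_mono (Iic_subset_Iic.2 hab)
  have hS : MeasurableSet {b | μ.map Ψ (Iic b) < t} := hmono.measurable measurableSet_Iio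
  have h := measure_setOf_measure_Iic_lt (ν := μ.map Ψ) t
  rw [Measure.map_apply hΨ hS, Measure.map_apply hΨ MeasurableSet.univ, preimage_univ] at h
  simpa only [preimage_ofPred_eq, hν_Iic] using h

variable (μ) in
/-- A key that is strictly increasing in `g` and, when `u` has no atoms, has no atoms itself:
the ties on an atom `{g = a}` of `g` are broken by `u`, spreading the atom over an interval of
length `μ {g = a}`. -/
noncomputable def tiebreakKey (g u : X → ℝ) (x : X) : ℝ :=
  g x + μ.real {y | g y < g x} +
    Real.sigmoid (u x) * (μ.real {y | g y ≤ g x} - μ.real {y | g y < g x})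

variable {g u : X → ℝ}

lemma measurable_tiebreakKey [IsFiniteMeasure μ] (hg : Measurable g) (hu : Measurable u) :
    Measurable (tiebreakKey μ g u) := by
  have hlt : Measurable fun a => μ.real {y | g y < a} :=
    Monotone.measurable fun a b hab => measureReal_mono fun y hy => lt_of_lt_of_le hy hab
  have hle : Measurable fun a => μ.real {y | g y ≤ a} :=
    Monotone.measurable fun a b hab => measureReal_mono fun y hy => le_trans hy hab
  exact (hg.add (hlt.comp hg)).add
    ((continuous_sigmoid.measurable.comp hu).mul ((hle.comp hg).sub (hlt.comp hg)))

lemma tiebreakKey_lt_of_lt [IsFiniteMeasure μ] {x y : X} (hxy : g x < g y) :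
    tiebreakKey μ g u x < tiebreakKey μ g u y := by
  have hx : μ.real {z | g z < g x} ≤ μ.real {z | g z ≤ g x} :=
    measureReal_mono fun z (hz : g z < _) => hz.le
  have hy : μ.real {z | g z < g y} ≤ μ.real {z | g z ≤ g y} :=
    measureReal_mono fun z (hz : g z < _) => hz.le
  have hxy' : μ.real {z | g z ≤ g x} ≤ μ.real {z | g z < g y} :=
    measureReal_mono fun z hz => lt_of_le_of_lt hz hxy
  have := Real.sigmoid_le_one (u x)
  have := Real.sigmoid_nonneg (u y)
  unfold tiebreakKey
  nlinarith

lemma measure_tiebreakKey_eq_eq_zero [IsFiniteMeasure μ] (hg : Measurable g)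
    (hu_atom : ∀ b, μ {x | u x = b} = 0) (c : ℝ) :
    μ {x | tiebreakKey μ g u x = c} = 0 := by
  rcases eq_empty_or_nonempty {x | tiebreakKey μ g u x = c} with h | ⟨x₀, hx₀⟩
  · rw [h, measure_empty]
  have hlevel : {x | tiebreakKey μ g u x = c} ⊆ {x | g x = g x₀} := fun x hx => by
    by_contra hne
    rcases lt_or_gt_of_ne hne with hlt | hlt
    · exact (tiebreakKey_lt_of_lt hlt).ne (hx.trans hx₀.symm)
    · exact (tiebreakKey_lt_of_lt hlt).ne (hx₀.trans hx.symm)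
  by_cases hatom : μ {x | g x = g x₀} = 0
  · exact measure_mono_null hlevel hatom
  have hjump : μ.real {y | g y ≤ g x₀} - μ.real {y | g y < g x₀} = μ.real {y | g y = g x₀} := by
    have hunion : {y | g y ≤ g x₀} = {y | g y < g x₀} ∪ {y | g y = g x₀} := by
      ext y; simp [le_iff_lt_or_eq]
    have hdisj : Disjoint {y | g y < g x₀} {y | g y = g x₀} :=
      disjoint_left.2 fun y (hy : g y < _) hy' => hy.ne hy'
    rw [hunion, measureReal_union hdisj (measurableSet_eq_fun hg measurable_const)]
    ring
  have hjump_pos : 0 < μ.real {y | g y = g x₀} :=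
    ENNReal.toReal_pos hatom (measure_ne_top μ _)
  refine measure_mono_null (fun x hx => ?_) (hu_atom (u x₀))
  have hgx : g x = g x₀ := hlevel hx
  have hkey : tiebreakKey μ g u x = tiebreakKey μ g u x₀ := hx.trans hx₀.symm
  simp only [tiebreakKey, hgx, hjump] at hkey
  exact Real.sigmoid_injective (mul_right_cancel₀ hjump_pos.ne' (add_left_cancel hkey))

theorem exists_uniform_rank [IsFiniteMeasure μ] (hg : Measurable g) (hu : Measurable u)
    (hu_atom : ∀ b, μ {x | u x = b} = 0) :
    ∃ σ : X → ℝ≥0∞, Measurable σ ∧ (∀ t, μ {x | σ x < t} = min t (μ univ)) ∧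
      ∀ x y, g x < g y → σ x ≤ σ y := by
  set Ψ := tiebreakKey μ g u
  have hΨ : Measurable Ψ := measurable_tiebreakKey hg hu
  have hmono : Monotone fun b => μ {y | Ψ y ≤ b} := fun a b hab =>
    measure_mono fun y hy => le_trans hy hab
  exact ⟨fun x => μ {y | Ψ y ≤ Ψ x}, hmono.measurable.comp hΨ,
    measure_setOf_measure_le_lt hΨ (measure_tiebreakKey_eq_eq_zero hg hu_atom),
    fun x y hxy => hmono (tiebreakKey_lt_of_lt hxy).le⟩

end Rank

section Quantile

variable {X : Type*} [MeasurableSpace X] {μ : Measure X} {f : X → ℝ}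

variable (μ f) in
/-- The decreasing rearrangement of `f`, as a function of the mass: a generalized inverse of the
tail function `s ↦ μ {s < f}`. -/
noncomputable def upperQuantile (t : ℝ≥0∞) : ℝ≥0∞ :=
  ⨆ s ∈ {s : ℝ | t < μ {x | s < f x}}, ENNReal.ofReal s

lemma antitone_upperQuantile : Antitone (upperQuantile μ f) := fun _ _ htt' =>
  biSup_mono fun _ hs => htt'.trans_lt hs

lemma exists_gt_lt_measure_setOf_lt {s : ℝ} {t : ℝ≥0∞} (h : t < μ {x | s < f x}) :
    ∃ s' > s, t < μ {x | s' < f x} := by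
  obtain ⟨v, hv_anti, hv_gt, hv_lim⟩ := exists_seq_strictAnti_tendsto s
  have hunion : ⋃ n, {x | v n < f x} = {x | s < f x} := by
    ext x
    simp only [mem_iUnion, mem_ofPred_eq]
    exact ⟨fun ⟨n, hn⟩ => (hv_gt n).trans hn,
      fun hx => (hv_lim.eventually (gt_mem_nhds hx)).exists⟩
  have hlim := tendsto_measure_iUnion_atTop (μ := μ) (s := fun n => {x | v n < f x})
    fun m n hmn x (hx : v m < f x) => (hv_anti.antitone hmn).trans_lt hx
  rw [hunion] at hlim
  obtain ⟨n, hn⟩ := (hlim.eventually (lt_mem_nhds h)).exists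
  exact ⟨v n, hv_gt n, hn⟩

lemma exists_measure_setOf_lt_lt [IsFiniteMeasure μ] (hf : Measurable f) {t : ℝ≥0∞}
    (ht : t ≠ 0) : ∃ s : ℝ, μ {x | s < f x} < t := by
  have hlim := tendsto_measure_iInter_atTop (μ := μ)
    (fun s => (measurableSet_lt measurable_const hf).nullMeasurableSet)
    (fun a b hab x (hx : b < f x) => hab.trans_lt hx) ⟨0, measure_ne_top μ _⟩
  have hempty : ⋂ s : ℝ, {x | s < f x} = ∅ :=
    eq_empty_of_forall_notMem fun x hx => lt_irrefl (f x) (mem_iInter.1 hx (f x))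
  rw [hempty, measure_empty] at hlim
  exact (hlim.eventually (gt_mem_nhds (pos_iff_ne_zero.2 ht))).exists

lemma lt_toReal_upperQuantile_iff [IsFiniteMeasure μ] (hf : Measurable f) (hf0 : 0 ≤ᵐ[μ] f)
    {t : ℝ≥0∞} (ht0 : t ≠ 0) (htM : t < μ univ) (s : ℝ) :
    s < (upperQuantile μ f t).toReal ↔ t < μ {x | s < f x} := by
  obtain ⟨s₀, hs₀⟩ := exists_measure_setOf_lt_lt (μ := μ) hf ht0
  have hbound : ∀ s', t < μ {x | s' < f x} → s' < s₀ := fun s' hs' => not_le.1 fun h =>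
    (hs'.trans_le (measure_mono fun x (hx : s' < f x) => h.trans_lt hx)).not_gt hs₀
  have hQ : upperQuantile μ f t ≠ ∞ := ne_top_of_le_ne_top ofReal_ne_top
    (iSup₂_le fun s' hs' => ofReal_le_ofReal (hbound s' hs').le)
  rcases lt_or_ge s 0 with hs | hs
  · have hfull : μ {x | s < f x} = μ univ :=
      measure_congr (eventuallyEq_set.2 (hf0.mono fun x hx => by simpa using hs.trans_le hx))
    simpa [hfull, htM] using hs.trans_le toReal_nonneg
  rw [← ENNReal.ofReal_lt_iff_lt_toReal hs hQ, upperQuantile, lt_biSup_iff]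
  constructor
  · rintro ⟨s', hs', hss'⟩
    exact hs'.trans_le
      (measure_mono fun x (hx : s' < f x) => (ofReal_lt_ofReal_iff'.1 hss').1.trans hx)
  · intro h
    obtain ⟨s', hss', hs'⟩ := exists_gt_lt_measure_setOf_lt h
    exact ⟨s', hs', ofReal_lt_ofReal_iff'.2 ⟨hss', hs.trans_lt hss'⟩⟩

lemma ae_ne_zero_and_lt_of_measure_lt_eq_min [IsFiniteMeasure μ] {σ : X → ℝ≥0∞}
    (hσ : Measurable σ) (hσ_unif : ∀ t, μ {x | σ x < t} = min t (μ univ)) :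
    ∀ᵐ x ∂μ, σ x ≠ 0 ∧ σ x < μ univ := by
  refine (ae_iff.2 ?_).and (ae_iff.2 ?_)
  · refine le_antisymm (le_of_forall_gt_imp_ge_of_dense fun c hc => ?_) zero_le
    calc μ {x | ¬σ x ≠ 0} ≤ μ {x | σ x < c} := measure_mono fun x hx => by simp_all
      _ ≤ c := (hσ_unif c).trans_le (min_le_left _ _)
  · have hS : MeasurableSet {x | σ x < μ univ} := hσ measurableSet_Iio
    rw [show {x | ¬σ x < μ univ} = {x | σ x < μ univ}ᶜ from rfl,
      measure_compl hS (measure_ne_top μ _), hσ_unif, min_self, tsub_self]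

lemma setOf_lt_upperQuantile_ae_eq [IsFiniteMeasure μ] (hf : Measurable f) (hf0 : 0 ≤ᵐ[μ] f)
    {σ : X → ℝ≥0∞} (hσ : Measurable σ) (hσ_unif : ∀ t, μ {x | σ x < t} = min t (μ univ))
    (s : ℝ) :
    {x | s < (upperQuantile μ f (σ x)).toReal} =ᵐ[μ] {x | σ x < μ {y | s < f y}} :=
  eventuallyEq_set.2 <| (ae_ne_zero_and_lt_of_measure_lt_eq_min hσ hσ_unif).mono fun _ hx =>
    lt_toReal_upperQuantile_iff hf hf0 hx.1 hx.2 s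

end Quantile

section LayerCake

variable {X : Type*} [MeasurableSpace X] {μ : Measure X}

theorem lintegral_ofReal_mul_eq_lintegral_lintegral {φ ψ : X → ℝ} (hφ : Measurable φ)
    (hψ : Measurable ψ) (hφ0 : 0 ≤ᵐ[μ] φ) (hψ0 : 0 ≤ᵐ[μ] ψ) :
    ∫⁻ x, ENNReal.ofReal (φ x * ψ x) ∂μ =
      ∫⁻ s in Ioi 0, ∫⁻ t in Ioi 0, μ ({x | s < φ x} ∩ {x | t < ψ x}) := by
  calc ∫⁻ x, ENNReal.ofReal (φ x * ψ x) ∂μ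
      = ∫⁻ x, ENNReal.ofReal (φ x) ∂μ.withDensity fun x => ENNReal.ofReal (ψ x) := by
        rw [lintegral_withDensity_eq_lintegral_mul μ hψ.ennreal_ofReal hφ.ennreal_ofReal]
        refine lintegral_congr_ae (hφ0.mono fun x hx => ?_)
        simp only [Pi.mul_apply, ← ENNReal.ofReal_mul (hx : 0 ≤ φ x), mul_comm]
    _ = ∫⁻ s in Ioi 0, ∫⁻ x in {x | s < φ x}, ENNReal.ofReal (ψ x) ∂μ := by
        rw [lintegral_eq_lintegral_meas_lt _
          ((withDensity_absolutelyContinuous μ _).ae_le hφ0) hφ.aemeasurable]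
        simp_rw [withDensity_apply _ (measurableSet_lt measurable_const hφ)]
    _ = ∫⁻ s in Ioi 0, ∫⁻ t in Ioi 0, μ ({x | s < φ x} ∩ {x | t < ψ x}) := by
        refine lintegral_congr fun s => ?_
        rw [lintegral_eq_lintegral_meas_lt _ (ae_restrict_of_ae hψ0) hψ.aemeasurable]
        simp_rw [Measure.restrict_apply (measurableSet_lt measurable_const hψ), inter_comm]

theorem integral_mul_le_integral_mul_of_measure_inter_le {φ₁ φ₂ ψ : X → ℝ}
    (hφ₁ : Measurable φ₁) (hφ₂ : Measurable φ₂) (hψ : Measurable ψ)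
    (hφ₁0 : 0 ≤ᵐ[μ] φ₁) (hφ₂0 : 0 ≤ᵐ[μ] φ₂) (hψ0 : 0 ≤ᵐ[μ] ψ)
    (hint : Integrable (fun x => φ₂ x * ψ x) μ)
    (h : ∀ s t, μ ({x | s < φ₁ x} ∩ {x | t < ψ x}) ≤ μ ({x | s < φ₂ x} ∩ {x | t < ψ x})) :
    ∫ x, φ₁ x * ψ x ∂μ ≤ ∫ x, φ₂ x * ψ x ∂μ := by
  have hnonneg : ∀ {φ : X → ℝ}, 0 ≤ᵐ[μ] φ → 0 ≤ᵐ[μ] fun x => φ x * ψ x := fun hφ0 => by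
    filter_upwards [hφ0, hψ0] with x h₁ h₂ using mul_nonneg h₁ h₂
  rw [integral_eq_lintegral_of_nonneg_ae (hnonneg hφ₁0) (hφ₁.mul hψ).aestronglyMeasurable,
    integral_eq_lintegral_of_nonneg_ae (hnonneg hφ₂0) (hφ₂.mul hψ).aestronglyMeasurable]
  refine ENNReal.toReal_mono hint.lintegral_lt_top.ne ?_
  rw [lintegral_ofReal_mul_eq_lintegral_lintegral hφ₁ hψ hφ₁0 hψ0,
    lintegral_ofReal_mul_eq_lintegral_lintegral hφ₂ hψ hφ₂0 hψ0]
  exact lintegral_mono fun s => lintegral_mono fun t => h s t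

end LayerCake

lemma subset_or_subset_of_lt_imp_le {X : Type*} {g : X → ℝ} {σ : X → ℝ≥0∞}
    (hσg : ∀ x y, g x < g y → σ x ≤ σ y) (c : ℝ≥0∞) (t : ℝ) :
    {x | σ x < c} ⊆ {x | g x ≤ t} ∨ {x | g x ≤ t} ⊆ {x | σ x < c} := by
  by_contra h
  simp only [not_or, not_subset, mem_ofPred_eq, not_le, not_lt] at h
  obtain ⟨⟨x, hxσ, hxg⟩, y, hyg, hyσ⟩ := h
  exact (hxσ.trans_le hyσ).not_ge (hσg y x (hyg.trans_lt hxg))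

section Rearrangement

variable {X : Type*} [MeasurableSpace X] {μ : Measure X}

open ProbabilityTheory

lemma measure_sdiff_le_of_subset_or_subset [IsFiniteMeasure μ] {A B E : Set X}
    (hB : NullMeasurableSet B μ) (hAB : A ⊆ B ∨ B ⊆ A) (hE : μ E = μ A) :
    μ (A \ B) ≤ μ (E \ B) := by
  rcases hAB with h | h
  · simp [sdiff_eq_empty.2 h]
  · rw [measure_sdiff h hB (measure_ne_top μ B), ← hE]
    exact le_measure_sdiff

theorem identDistrib_of_forall_measure_lt_eq [IsFiniteMeasure μ] {f h : X → ℝ}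
    (hf : Measurable f) (hh : Measurable h)
    (hhf : ∀ α, μ {x | α < h x} = μ {x | α < f x}) : IdentDistrib h f μ μ := by
  refine ⟨hh.aemeasurable, hf.aemeasurable, Measure.ext_of_Iic _ _ fun α => ?_⟩
  have hIic : ∀ {φ : X → ℝ}, Measurable φ → μ.map φ (Iic α) = μ univ - μ {x | α < φ x} :=
    fun hφ => by
      rw [Measure.map_apply hφ measurableSet_Iic,
        ← measure_compl (measurableSet_lt measurable_const hφ) (measure_ne_top μ _)]
      congr 1
      ext x
      simp
  rw [hIic hh, hIic hf, hhf]

theorem ae_eq_of_forall_measure_lt_eq_of_subsingleton [Subsingleton X] {f h : X → ℝ}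
    (hhf : ∀ α, μ {x | α < h x} = μ {x | α < f x}) : h =ᵐ[μ] f := by
  rcases eq_zero_or_neZero μ with rfl | hμ
  · simp [EventuallyEq]
  refine Eventually.of_forall fun x => eq_of_forall_lt_iff fun α => ?_
  have hset : ∀ φ : X → ℝ, {y | α < φ y} = if α < φ x then univ else ∅ := fun φ => by
    split_ifs with hα <;> ext y <;> simp [Subsingleton.elim y x, hα]
  have hμ_univ : μ univ ≠ 0 := Measure.measure_univ_ne_zero.2 hμ.out
  have hpos : ∀ φ : X → ℝ, α < φ x ↔ μ {y | α < φ y} ≠ 0 := fun φ => by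
    rw [hset]
    split_ifs with hα <;> simp [hα, hμ_univ]
  rw [hpos h, hpos f, hhf]

theorem exists_rearrangement_integral_mul_le [IsFiniteMeasure μ] {u : X → ℝ} (hu : Measurable u)
    (hu_atom : ∀ b, μ {x | u x = b} = 0) {f g : X → ℝ} (hf : Measurable f) (hg : Measurable g)
    (hf2 : MemLp f 2 μ) (hg2 : MemLp g 2 μ) (hf0 : 0 ≤ᵐ[μ] f) (hg0 : 0 ≤ᵐ[μ] g) :
    ∃ f' : X → ℝ, Measurable f' ∧ (∀ α, μ {x | α < f' x} = μ {x | α < f x}) ∧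
      ∀ h : X → ℝ, Measurable h → (∀ α, μ {x | α < h x} = μ {x | α < f x}) →
        ∫ x, f' x * g x ∂μ ≤ ∫ x, h x * g x ∂μ := by
  obtain ⟨σ, hσ, hσ_unif, hσ_mono⟩ := exists_uniform_rank hg hu hu_atom
  set f' := fun x => (upperQuantile μ f (σ x)).toReal
  have hf' : Measurable f' :=
    ENNReal.measurable_toReal.comp (antitone_upperQuantile.measurable.comp hσ)
  have hlevel : ∀ s, {x | s < f' x} =ᵐ[μ] {x | σ x < μ {y | s < f y}} :=
    setOf_lt_upperQuantile_ae_eq hf hf0 hσ hσ_unif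
  have hσ_tail : ∀ s, μ {x | σ x < μ {y | s < f y}} = μ {x | s < f x} := fun s => by
    rw [hσ_unif, min_eq_left (measure_mono (subset_univ _))]
  have hdist : ∀ s, μ {x | s < f' x} = μ {x | s < f x} := fun s =>
    (measure_congr (hlevel s)).trans (hσ_tail s)
  refine ⟨f', hf', hdist, fun h hh hhf => ?_⟩
  have hh_law := identDistrib_of_forall_measure_lt_eq hf hh hhf
  refine integral_mul_le_integral_mul_of_measure_inter_le hf' hh hg
    (Eventually.of_forall fun x => toReal_nonneg) (hh_law.symm.ae_snd measurableSet_Ici hf0) hg0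
    ((hh_law.memLp_iff.2 hf2).integrable_mul hg2) fun s t => ?_
  have hsdiff : ∀ φ : X → ℝ, {x | s < φ x} ∩ {x | t < g x} = {x | s < φ x} \ {x | g x ≤ t} :=
    fun φ => by ext; simp
  rw [hsdiff, hsdiff]
  refine (measure_congr ((hlevel s).diff EventuallyEq.rfl)).trans_le ?_
  exact measure_sdiff_le_of_subset_or_subset
    (measurableSet_le hg measurable_const).nullMeasurableSet
    (subset_or_subset_of_lt_imp_le hσ_mono _ t) ((hhf s).trans (hσ_tail s).symm)

end Rearrangement

theorem stmt_3_general (d : ℕ) (D : Set (EuclideanSpace ℝ (Fin d)))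
    (hDb : Bornology.IsBounded D)
    (f g : EuclideanSpace ℝ (Fin d) → ℝ)
    (hfm : Measurable f) (hgm : Measurable g)
    (hf2 : MemLp f 2 (volume.restrict D)) (hg2 : MemLp g 2 (volume.restrict D))
    (hf0 : 0 ≤ᵐ[volume.restrict D] f) (hg0 : 0 ≤ᵐ[volume.restrict D] g) :
    ∃ ftilde : EuclideanSpace ℝ (Fin d) → ℝ, Measurable ftilde ∧
      (∀ α : ℝ, volume.restrict D {x | α < ftilde x} = volume.restrict D {x | α < f x}) ∧
      ∀ h : EuclideanSpace ℝ (Fin d) → ℝ, Measurable h →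
        (∀ α : ℝ, volume.restrict D {x | α < h x} = volume.restrict D {x | α < f x}) →
        ∫ x, ftilde x * g x ∂(volume.restrict D) ≤ ∫ x, h x * g x ∂(volume.restrict D) := by
  have : IsFiniteMeasure (volume.restrict D) := isFiniteMeasure_restrict.2 hDb.measure_lt_top.ne
  rcases Nat.eq_zero_or_pos d with rfl | hd
  · refine ⟨f, hfm, fun _ => rfl, fun h _ hhf => (integral_congr_ae ?_).le⟩
    filter_upwards [ae_eq_of_forall_measure_lt_eq_of_subsingleton hhf] with x hx
    rw [hx]
  have : NeZero d := ⟨hd.ne'⟩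
  obtain ⟨u, hu⟩ := exists_measurableEmbedding_real (EuclideanSpace ℝ (Fin d))
  exact exists_rearrangement_integral_mul_le hu.measurable
    (fun b => Set.Subsingleton.measure_zero (fun x hx y hy => hu.injective (hx.trans hy.symm)) _)
    hfm hgm hf2 hg2 hf0 hg0

theorem stmt_3 (d : ℕ) (D : Set (EuclideanSpace ℝ (Fin d)))
    (hDo : IsOpen D) (hDb : Bornology.IsBounded D)
    (f g : EuclideanSpace ℝ (Fin d) → ℝ)
    (hfm : Measurable f) (hgm : Measurable g)
    (hf2 : MemLp f 2 (volume.restrict D)) (hg2 : MemLp g 2 (volume.restrict D))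
    (hf0 : 0 ≤ᵐ[volume.restrict D] f) (hg0 : 0 ≤ᵐ[volume.restrict D] g) :
    ∃ ftilde : EuclideanSpace ℝ (Fin d) → ℝ, Measurable ftilde ∧
      (∀ α : ℝ, volume.restrict D {x | α < ftilde x} = volume.restrict D {x | α < f x}) ∧
      ∀ h : EuclideanSpace ℝ (Fin d) → ℝ, Measurable h →
        (∀ α : ℝ, volume.restrict D {x | α < h x} = volume.restrict D {x | α < f x}) →
        ∫ x, ftilde x * g x ∂(volume.restrict D) ≤ ∫ x, h x * g x ∂(volume.restrict D) :=
  stmt_3_general d D hDb f g hfm hgm hf2 hg2 hf0 hg0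
end

section
/- Let D ⊆ ℝ^d be a bounded open set with Lebesgue measure λ, let v ∈ L²(D,λ), and let 0 < c < λ(D). Suppose A ⊆ D is a measurable set with λ(A) = c such that ∫_A v dλ ≤ ∫_D h v dλ for every h ∈ S(c) = {h ∈ L²(D,λ) : 0 ≤ h ≤ 1 λ-a.e. and ∫_D h dλ = c}. Then the essential supremum of v over A is at most the essential infimum of v over D \ A. -/
/-
If `v` exceeded `t` on a non-null part `A₁` of `A` and stayed below some `s < t` on a
non-null part `B₁` of `D \ A`, the competitor `h = 𝟙_A - p 𝟙_{A₁} + q 𝟙_{B₁}` with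
`p μ(A₁) = q μ(B₁)` and `p, q ≤ 1` would still lie in `S(c)`, and `∫ h v` would be smaller
than `∫_A v` by at least `(t - s) p μ(A₁) > 0`. So for all `s < t`, `v ≤ t` a.e. on `A` or
`v ≥ s` a.e. on `D \ A`, which is the claimed inequality between the essential supremum and
infimum.
-/

open MeasureTheory Filter Set
open scoped ENNReal

theorem indicator_sub_mul_indicator_add_mul_indicator_mem_Icc {α : Type*} {A A₁ B₁ : Set α}
    (hA₁ : A₁ ⊆ A) (hB₁ : B₁ ⊆ Aᶜ) {p q : ℝ} (hp : p ∈ Icc (0 : ℝ) 1) (hq : q ∈ Icc (0 : ℝ) 1)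
    (x : α) :
    0 ≤ A.indicator 1 x - p * A₁.indicator 1 x + q * B₁.indicator 1 x ∧
      A.indicator 1 x - p * A₁.indicator 1 x + q * B₁.indicator 1 x ≤ (1 : ℝ) := by
  obtain ⟨hp0, hp1⟩ := hp
  obtain ⟨hq0, hq1⟩ := hq
  by_cases hxA : x ∈ A
  · have hxB : x ∉ B₁ := fun h => hB₁ h hxA
    by_cases hxA₁ : x ∈ A₁ <;> simp [*]
  · have hxA₁ : x ∉ A₁ := fun h => hxA (hA₁ h)
    by_cases hxB : x ∈ B₁ <;> simp [*]

section

variable {α : Type*} [MeasurableSpace α] {μ : Measure α}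

-- On `ℝ`, `essSup` is a conditionally complete `limsup`; these coboundedness facts are what
-- make `essSup_le_of_ae_le` and `le_essInf_of_ae_le` apply to unbounded functions.
theorem exists_frequently_ae_abs_le {ν : Measure α} (hν : ν ≠ 0) (f : α → ℝ) :
    ∃ a : ℝ, ∃ᵐ x ∂ν, |f x| ≤ a := by
  by_contra! h
  have hfalse : ∀ᵐ x ∂ν, False := by
    filter_upwards [ae_all_iff.2 fun n : ℕ => (h n)] with x hx
    obtain ⟨n, hn⟩ := exists_nat_ge |f x|
    exact (hx n).not_ge hn
  exact hν (ae_eq_bot.1 (eventually_false_iff_eq_bot.1 hfalse))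

theorem isCoboundedUnder_le_ae {ν : Measure α} (hν : ν ≠ 0) (f : α → ℝ) :
    IsCoboundedUnder (· ≤ ·) (ae ν) f :=
  have ⟨a, ha⟩ := exists_frequently_ae_abs_le hν f
  .of_frequently_ge (a := -a) <| ha.mono fun _ hx => neg_le_of_abs_le hx

theorem isCoboundedUnder_ge_ae {ν : Measure α} (hν : ν ≠ 0) (f : α → ℝ) :
    IsCoboundedUnder (· ≥ ·) (ae ν) f :=
  have ⟨a, ha⟩ := exists_frequently_ae_abs_le hν f
  .of_frequently_le (a := a) <| ha.mono fun _ hx => le_of_abs_le hx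

theorem essSup_le_essInf_of_forall_lt {ν₁ ν₂ : Measure α} (hν₁ : ν₁ ≠ 0) (hν₂ : ν₂ ≠ 0)
    {f : α → ℝ} (h : ∀ s t, s < t → (∀ᵐ x ∂ν₁, f x ≤ t) ∨ ∀ᵐ x ∂ν₂, s ≤ f x) :
    essSup f ν₁ ≤ essInf f ν₂ := by
  by_contra! hlt
  obtain ⟨s, hs, hst'⟩ := exists_between hlt
  obtain ⟨t, hst, ht⟩ := exists_between hst'
  rcases h s t hst with h₁ | h₂
  · exact ht.not_ge (essSup_le_of_ae_le t h₁ (isCoboundedUnder_le_ae hν₁ f))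
  · exact hs.not_ge (le_essInf_of_ae_le s h₂ (isCoboundedUnder_ge_ae hν₂ f))

theorem setIntegral_le_of_le_const_real {f : α → ℝ} {s : Set α} {c : ℝ}
    (hs : MeasurableSet s) (hμs : μ s ≠ ∞) (hf : ∀ x ∈ s, f x ≤ c) (hfint : IntegrableOn f s μ) :
    ∫ x in s, f x ∂μ ≤ c * μ.real s := by
  simpa [mul_comm] using setIntegral_mono_on hfint (integrableOn_const hμs) hs hf

theorem integral_indicator_sub_mul_indicator_add_mul_indicator {f : α → ℝ}
    (hf : Integrable f μ) {A B C : Set α} (hA : MeasurableSet A) (hB : MeasurableSet B)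
    (hC : MeasurableSet C) (p q : ℝ) :
    ∫ x, A.indicator f x - p * B.indicator f x + q * C.indicator f x ∂μ =
      ∫ x in A, f x ∂μ - p * ∫ x in B, f x ∂μ + q * ∫ x in C, f x ∂μ := by
  have hAB : Integrable (fun x => A.indicator f x - p * B.indicator f x) μ :=
    (hf.indicator hA).sub ((hf.indicator hB).const_mul p)
  rw [integral_add hAB ((hf.indicator hC).const_mul q),
    integral_sub (hf.indicator hA) ((hf.indicator hB).const_mul p), integral_const_mul,
    integral_const_mul, integral_indicator hA, integral_indicator hB, integral_indicator hC]

theorem exists_integral_mul_lt_setIntegral [IsFiniteMeasure μ] {f : α → ℝ}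
    (hfm : Measurable f) (hf : Integrable f μ) {A : Set α} (hA : MeasurableSet A) {s t : ℝ}
    (hst : s < t)
    (hA₁ : ∃ᵐ x ∂μ.restrict A, t < f x) (hB₁ : ∃ᵐ x ∂μ.restrict Aᶜ, f x < s) :
    ∃ g : α → ℝ, Measurable g ∧ (∀ x, 0 ≤ g x ∧ g x ≤ 1) ∧ ∫ x, g x ∂μ = μ.real A ∧
      ∫ x, g x * f x ∂μ < ∫ x in A, f x ∂μ := by
  have hA₁m : MeasurableSet {x | t < f x} := measurableSet_lt measurable_const hfm
  have hB₁m : MeasurableSet {x | f x < s} := measurableSet_lt hfm measurable_const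
  rw [frequently_ae_iff, Measure.restrict_apply hA₁m] at hA₁
  rw [frequently_ae_iff, Measure.restrict_apply hB₁m] at hB₁
  set A₁ := {x | t < f x} ∩ A
  set B₁ := {x | f x < s} ∩ Aᶜ
  replace hA₁m : MeasurableSet A₁ := hA₁m.inter hA
  replace hB₁m : MeasurableSet B₁ := hB₁m.inter hA.compl
  set a := μ.real A₁
  set b := μ.real B₁
  have ha : 0 < a := ENNReal.toReal_pos hA₁ (measure_ne_top μ _)
  have hb : 0 < b := ENNReal.toReal_pos hB₁ (measure_ne_top μ _)
  set p := b / (a + b)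
  set q := a / (a + b)
  have hpa : p * a = a * b / (a + b) := by ring
  have hqb : q * b = a * b / (a + b) := by ring
  have hp : p ∈ Icc 0 1 := ⟨by positivity, div_le_one_of_le₀ (by linarith) (by positivity)⟩
  have hq : q ∈ Icc 0 1 := ⟨by positivity, div_le_one_of_le₀ (by linarith) (by positivity)⟩
  refine ⟨fun x => A.indicator 1 x - p * A₁.indicator 1 x + q * B₁.indicator 1 x, ?_,
    indicator_sub_mul_indicator_add_mul_indicator_mem_Icc inter_subset_right inter_subset_right
      hp hq, ?_, ?_⟩
  · fun_prop (disch := assumption)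
  · beta_reduce
    rw [integral_indicator_sub_mul_indicator_add_mul_indicator (f := 1) (integrable_const 1)
      hA hA₁m hB₁m]
    simp only [Pi.one_apply, setIntegral_const, smul_eq_mul, mul_one]
    linarith
  · have hgf : ∀ x, (A.indicator 1 x - p * A₁.indicator 1 x + q * B₁.indicator 1 x) * f x =
        A.indicator f x - p * A₁.indicator f x + q * B₁.indicator f x := by
      intro x
      simp only [add_mul, sub_mul, mul_assoc, ← Set.indicator_mul_left, Pi.one_apply, one_mul]
    simp_rw [hgf, integral_indicator_sub_mul_indicator_add_mul_indicator hf hA hA₁m hB₁m]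
    have hA₁f : t * a ≤ ∫ x in A₁, f x ∂μ :=
      setIntegral_ge_of_const_le_real hA₁m (measure_ne_top μ _) (fun x hx => hx.1.le)
        hf.integrableOn
    have hB₁f : ∫ x in B₁, f x ∂μ ≤ s * b :=
      setIntegral_le_of_le_const_real hB₁m (measure_ne_top μ _) (fun x hx => hx.1.le)
        hf.integrableOn
    have hgap : s * (a * b / (a + b)) < t * (a * b / (a + b)) :=
      mul_lt_mul_of_pos_right hst (by positivity)
    have hpA₁ : t * (a * b / (a + b)) ≤ p * ∫ x in A₁, f x ∂μ := by
      rw [← hpa, mul_left_comm]; exact mul_le_mul_of_nonneg_left hA₁f hp.1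
    have hqB₁ : q * ∫ x in B₁, f x ∂μ ≤ s * (a * b / (a + b)) := by
      rw [← hqb, mul_left_comm]; exact mul_le_mul_of_nonneg_left hB₁f hq.1
    linarith

theorem essSup_restrict_le_essInf_restrict_compl_of_forall_setIntegral_le [IsFiniteMeasure μ]
    {f : α → ℝ} (hfm : Measurable f) (hf : Integrable f μ) {A : Set α} (hA : MeasurableSet A)
    (hA0 : μ A ≠ 0) (hAc0 : μ Aᶜ ≠ 0)
    (hmin : ∀ g : α → ℝ, Measurable g → (∀ x, 0 ≤ g x ∧ g x ≤ 1) → ∫ x, g x ∂μ = μ.real A →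
      ∫ x in A, f x ∂μ ≤ ∫ x, g x * f x ∂μ) :
    essSup f (μ.restrict A) ≤ essInf f (μ.restrict Aᶜ) := by
  refine essSup_le_essInf_of_forall_lt (by simpa using hA0) (by simpa using hAc0)
    fun s t hst => ?_
  by_contra! h
  obtain ⟨g, hgm, hg, hgint, hlt⟩ := exists_integral_mul_lt_setIntegral hfm hf hA hst h.1 h.2
  exact (hmin g hgm hg hgint).not_gt hlt

end

theorem stmt_5_general (d : ℕ) (D : Set (EuclideanSpace ℝ (Fin d)))
    (hDb : Bornology.IsBounded D)
    (v : Lp ℝ 2 (volume.restrict D))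
    (c : ℝ) (hc0 : 0 < c) (hc1 : ENNReal.ofReal c < volume D)
    (S : Set (Lp ℝ 2 (volume.restrict D)))
    (hS : S = {h | (∀ᵐ x ∂(volume.restrict D), 0 ≤ h x ∧ h x ≤ 1) ∧
      ∫ x, h x ∂(volume.restrict D) = c})
    (A : Set (EuclideanSpace ℝ (Fin d))) (hAm : MeasurableSet A) (hAD : A ⊆ D)
    (hAc : volume A = ENNReal.ofReal c)
    (hmin : ∀ h ∈ S, ∫ x in A, v x ∂(volume.restrict D) ≤ ∫ x, h x * v x ∂(volume.restrict D)) :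
    essSup (fun x => v x) ((volume.restrict D).restrict A) ≤
      essInf (fun x => v x) ((volume.restrict D).restrict (D \ A)) := by
  have : IsFiniteMeasure (volume.restrict D) :=
    isFiniteMeasure_restrict.2 hDb.measure_lt_top.ne
  have hμA : volume.restrict D A = ENNReal.ofReal c := by
    rw [Measure.restrict_eq_self _ hAD, hAc]
  have hμAc : volume.restrict D Aᶜ ≠ 0 := by
    rw [Measure.restrict_apply hAm.compl, inter_comm, ← sdiff_eq]
    exact ((tsub_pos_of_lt (hAc ▸ hc1)).trans_le le_measure_sdiff).ne'
  have hDA : (volume.restrict D).restrict (D \ A) = (volume.restrict D).restrict Aᶜ := by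
    rw [Measure.restrict_restrict_of_subset sdiff_subset, Measure.restrict_restrict hAm.compl,
      inter_comm, sdiff_eq]
  rw [hDA]
  refine essSup_restrict_le_essInf_restrict_compl_of_forall_setIntegral_le
    (Lp.stronglyMeasurable v).measurable ((Lp.memLp v).integrable one_le_two) hAm
    (by simp [hμA, hc0]) hμAc fun g hgm hg hgint => ?_
  have hg2 : MemLp g 2 (volume.restrict D) :=
    .of_bound hgm.aestronglyMeasurable 1 (ae_of_all _ fun x => by
      rw [Real.norm_of_nonneg (hg x).1]; exact (hg x).2)
  have hgS : hg2.toLp g ∈ S := by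
    rw [hS]
    refine ⟨hg2.coeFn_toLp.mono fun x hx => hx ▸ hg x, ?_⟩
    rw [integral_congr_ae hg2.coeFn_toLp, hgint, measureReal_def, hμA,
      ENNReal.toReal_ofReal hc0.le]
  calc ∫ x in A, v x ∂(volume.restrict D)
      ≤ ∫ x, hg2.toLp g x * v x ∂(volume.restrict D) := hmin _ hgS
    _ = ∫ x, g x * v x ∂(volume.restrict D) :=
      integral_congr_ae (hg2.coeFn_toLp.mono fun x hx => congrArg (· * v x) hx)

theorem stmt_5 (d : ℕ) (D : Set (EuclideanSpace ℝ (Fin d)))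
    (hDo : IsOpen D) (hDb : Bornology.IsBounded D)
    (v : Lp ℝ 2 (volume.restrict D))
    (c : ℝ) (hc0 : 0 < c) (hc1 : ENNReal.ofReal c < volume D)
    (S : Set (Lp ℝ 2 (volume.restrict D)))
    (hS : S = {h | (∀ᵐ x ∂(volume.restrict D), 0 ≤ h x ∧ h x ≤ 1) ∧
      ∫ x, h x ∂(volume.restrict D) = c})
    (A : Set (EuclideanSpace ℝ (Fin d))) (hAm : MeasurableSet A) (hAD : A ⊆ D)
    (hAc : volume A = ENNReal.ofReal c)
    (hmin : ∀ h ∈ S, ∫ x in A, v x ∂(volume.restrict D) ≤ ∫ x, h x * v x ∂(volume.restrict D)) :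
    essSup (fun x => v x) ((volume.restrict D).restrict A) ≤
      essInf (fun x => v x) ((volume.restrict D).restrict (D \ A)) :=
  stmt_5_general d D hDb v c hc0 hc1 S hS A hAm hAD hAc hmin
end

section
/- Let D ⊆ ℝ^d be a bounded open set with Lebesgue measure λ, let v ∈ L²(D,λ), and let 0 < c < λ(D). Suppose f̂ ∈ S(c) = {h ∈ L²(D,λ) : 0 ≤ h ≤ 1 λ-a.e. and ∫_D h dλ = c} satisfies ∫_D f̂ v dλ ≤ ∫_D h v dλ for every h ∈ S(c). Then there exists α ∈ ℝ such that f̂ = 1 λ-a.e. on the set {x ∈ D : v(x) < α} and f̂ = 0 λ-a.e. on the set {x ∈ D : v(x) > α}. -/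
/-!
Bathtub principle. If `f` were not of threshold type, there would be levels `a < b` and
sets of positive measure `A ⊆ {v < a, f ≤ 1 - ε}` and `B ⊆ {v > b, f ≥ ε}`. Moving a little
mass from `B` to `A` keeps `0 ≤ f ≤ 1` and `∫ f`, and lowers `∫ f v` by at least
`(b - a)` times the mass moved. Hence for `a < b` one of `{v < a, f < 1}`, `{v > b, f > 0}` is
null, and `α` is the supremum of the levels `t` for which `{v < t, f < 1}` is null; the mass
constraint `0 < ∫ f < λ(D)` makes this supremum finite.
-/

open MeasureTheory Set

section L2

variable {α : Type*} [MeasurableSpace α] {μ : Measure α}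

theorem integral_mul_eq_inner (f g : Lp ℝ 2 μ) : ∫ x, f x * g x ∂μ = inner ℝ f g := by
  simp [L2.inner_def, mul_comm]

theorem integral_eq_inner_one [IsFiniteMeasure μ] (f : Lp ℝ 2 μ) :
    ∫ x, f x ∂μ =
      inner ℝ (indicatorConstLp 2 MeasurableSet.univ (measure_ne_top μ univ) (1 : ℝ)) f := by
  rw [L2.inner_indicatorConstLp_one, setIntegral_univ]

theorem real_inner_indicatorConstLp {s : Set α} (hs : MeasurableSet s) (hμs : μ s ≠ ⊤) (c : ℝ)
    (f : Lp ℝ 2 μ) : inner ℝ (indicatorConstLp 2 hs hμs c) f = c * ∫ x in s, f x ∂μ := by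
  rw [L2.inner_indicatorConstLp_eq_inner_setIntegral, RCLike.inner_apply, conj_trivial, mul_comm]

variable [IsFiniteMeasure μ] {A B : Set α} (hA : MeasurableSet A) (hB : MeasurableSet B)
  (f : Lp ℝ 2 μ) (a b : ℝ)

theorem coeFn_add_indicatorConstLp_sub_indicatorConstLp :
    ⇑(f + indicatorConstLp 2 hA (measure_ne_top μ A) a
      - indicatorConstLp 2 hB (measure_ne_top μ B) b)
      =ᵐ[μ] fun x => f x + A.indicator (fun _ => a) x - B.indicator (fun _ => b) x := by
  filter_upwards [Lp.coeFn_sub (f + indicatorConstLp 2 hA (measure_ne_top μ A) a) _,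
    Lp.coeFn_add f (indicatorConstLp 2 hA (measure_ne_top μ A) a),
    indicatorConstLp_coeFn (p := 2) (hs := hA) (hμs := measure_ne_top μ A) (c := a),
    indicatorConstLp_coeFn (p := 2) (hs := hB) (hμs := measure_ne_top μ B) (c := b)]
    with x hsub hadd hAx hBx
  rw [hsub, Pi.sub_apply, hadd, Pi.add_apply, hAx, hBx]

theorem integral_add_indicatorConstLp_sub_indicatorConstLp :
    ∫ x, (f + indicatorConstLp 2 hA (measure_ne_top μ A) a
      - indicatorConstLp 2 hB (measure_ne_top μ B) b) x ∂μ
      = ∫ x, f x ∂μ + μ.real A * a - μ.real B * b := by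
  simp only [integral_eq_inner_one, inner_sub_right, inner_add_right]
  simp only [← integral_eq_inner_one, integral_indicatorConstLp, smul_eq_mul]

theorem integral_add_indicatorConstLp_sub_indicatorConstLp_mul (v : Lp ℝ 2 μ) :
    ∫ x, (f + indicatorConstLp 2 hA (measure_ne_top μ A) a
      - indicatorConstLp 2 hB (measure_ne_top μ B) b) x * v x ∂μ
      = ∫ x, f x * v x ∂μ + a * ∫ x in A, v x ∂μ - b * ∫ x in B, v x ∂μ := by
  simp only [integral_mul_eq_inner, inner_sub_left, inner_add_left, real_inner_indicatorConstLp]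

theorem ae_bounds_add_indicatorConstLp_sub_indicatorConstLp
    (hf : ∀ᵐ x ∂μ, 0 ≤ f x ∧ f x ≤ 1) (ha : 0 ≤ a) (hb : 0 ≤ b) (hAB : Disjoint A B)
    (hAf : ∀ x ∈ A, f x + a ≤ 1) (hBf : ∀ x ∈ B, b ≤ f x) :
    ∀ᵐ x ∂μ, 0 ≤ (f + indicatorConstLp 2 hA (measure_ne_top μ A) a
      - indicatorConstLp 2 hB (measure_ne_top μ B) b) x ∧
      (f + indicatorConstLp 2 hA (measure_ne_top μ A) a
      - indicatorConstLp 2 hB (measure_ne_top μ B) b) x ≤ 1 := by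
  filter_upwards [coeFn_add_indicatorConstLp_sub_indicatorConstLp hA hB f a b, hf]
    with x hx ⟨hf0, hf1⟩
  rw [hx]
  by_cases hxA : x ∈ A
  · have hxB : x ∉ B := hAB.notMem_of_mem_left hxA
    simp only [indicator_of_mem hxA, indicator_of_notMem hxB]
    constructor <;> linarith [hAf x hxA]
  · by_cases hxB : x ∈ B
    · simp only [indicator_of_notMem hxA, indicator_of_mem hxB]
      constructor <;> linarith [hBf x hxB]
    · simp only [indicator_of_notMem hxA, indicator_of_notMem hxB]
      constructor <;> linarith

end L2

section Threshold

variable {α : Type*} [MeasurableSpace α] {μ : Measure α}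

theorem exists_measure_setOf_and_le_ne_zero {p : α → Prop} {g : α → ℝ}
    (h : μ {x | p x ∧ 0 < g x} ≠ 0) : ∃ ε > 0, μ {x | p x ∧ ε ≤ g x} ≠ 0 := by
  by_contra! hε
  refine h (measure_mono_null (fun x ⟨hp, hg⟩ => ?_)
    (measure_iUnion_null fun n : ℕ => hε (1 / (n + 1)) Nat.one_div_pos_of_nat))
  obtain ⟨n, hn⟩ := exists_nat_one_div_lt hg
  exact mem_iUnion.2 ⟨n, hp, hn.le⟩

theorem measure_setOf_lt_and_eq_zero {v : α → ℝ} {p : α → Prop} {c : ℝ}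
    (h : ∀ t < c, μ {x | v x < t ∧ p x} = 0) : μ {x | v x < c ∧ p x} = 0 := by
  refine measure_mono_null (fun x ⟨hv, hp⟩ => ?_)
    (measure_iUnion_null fun n : ℕ => h (c - 1 / (n + 1)) (sub_lt_self c Nat.one_div_pos_of_nat))
  obtain ⟨n, hn⟩ := exists_nat_one_div_lt (sub_pos.2 hv)
  exact mem_iUnion.2 ⟨n, by linarith, hp⟩

theorem measure_setOf_gt_and_eq_zero {v : α → ℝ} {p : α → Prop} {c : ℝ}
    (h : ∀ t > c, μ {x | t < v x ∧ p x} = 0) : μ {x | c < v x ∧ p x} = 0 := by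
  simpa using measure_setOf_lt_and_eq_zero (v := -v) (c := -c) (p := p)
    fun t ht => by simpa [neg_lt] using h (-t) (lt_neg_of_lt_neg ht)

theorem measure_setOf_eq_zero_of_forall_lt_and {v : α → ℝ} {p : α → Prop}
    (h : ∀ t, μ {x | v x < t ∧ p x} = 0) : μ {x | p x} = 0 := by
  refine measure_mono_null (fun x hp => ?_) (measure_iUnion_null fun n : ℕ => h n)
  obtain ⟨n, hn⟩ := exists_nat_gt (v x)
  exact mem_iUnion.2 ⟨n, hn, hp⟩

theorem measure_setOf_eq_zero_of_forall_gt_and {v : α → ℝ} {p : α → Prop}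
    (h : ∀ t, μ {x | t < v x ∧ p x} = 0) : μ {x | p x} = 0 :=
  measure_setOf_eq_zero_of_forall_lt_and (v := -v) fun t => by simpa [neg_lt] using h (-t)

theorem exists_threshold_of_measure_eq_zero_or {v f : α → ℝ}
    (hexch : ∀ a b, a < b → μ {x | v x < a ∧ f x < 1} = 0 ∨ μ {x | b < v x ∧ 0 < f x} = 0)
    (hpos : μ {x | 0 < f x} ≠ 0) (hlt : μ {x | f x < 1} ≠ 0) :
    ∃ c, μ {x | v x < c ∧ f x < 1} = 0 ∧ μ {x | c < v x ∧ 0 < f x} = 0 := by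
  set T := {t | μ {x | v x < t ∧ f x < 1} = 0}
  have hmono : ∀ {s t : ℝ}, s ≤ t → t ∈ T → s ∈ T := fun hst ht => by
    refine measure_mono_null (fun x hx => ?_) ht
    exact ⟨hx.1.trans_le hst, hx.2⟩
  have hne : T.Nonempty := by
    by_contra hT
    exact hpos (measure_setOf_eq_zero_of_forall_gt_and fun b =>
      (hexch (b - 1) b (sub_one_lt b)).resolve_left fun h => hT ⟨b - 1, h⟩)
  have hbdd : BddAbove T := by
    by_contra hT
    rw [not_bddAbove_iff] at hT
    refine hlt (measure_setOf_eq_zero_of_forall_lt_and (v := v) fun t => ?_)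
    obtain ⟨s, hs, hts⟩ := hT t
    exact hmono hts.le hs
  refine ⟨sSup T, measure_setOf_lt_and_eq_zero fun t ht => ?_,
    measure_setOf_gt_and_eq_zero fun t ht => ?_⟩
  · obtain ⟨s, hs, hts⟩ := exists_lt_of_lt_csSup hne ht
    exact hmono hts.le hs
  · obtain ⟨s, hs, hst⟩ := exists_between ht
    exact (hexch s t hst).resolve_left fun hsT => (le_csSup hbdd hsT).not_gt hs

theorem measure_setOf_pos_ne_zero_of_integral_pos {f : α → ℝ} (h : 0 < ∫ x, f x ∂μ) :
    μ {x | 0 < f x} ≠ 0 := by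
  intro h0
  refine h.not_ge (integral_nonpos_of_ae ?_)
  filter_upwards [measure_eq_zero_iff_ae_notMem.1 h0] with x hx using not_lt.1 hx

theorem measure_setOf_lt_ne_zero_of_integral_lt [IsFiniteMeasure μ] {f : α → ℝ}
    (hf : Integrable f μ) {c : ℝ} (h : ∫ x, f x ∂μ < μ.real univ * c) : μ {x | f x < c} ≠ 0 := by
  intro h0
  refine h.not_ge ?_
  calc μ.real univ * c = ∫ _, c ∂μ := by rw [integral_const, smul_eq_mul]
    _ ≤ ∫ x, f x ∂μ := integral_mono_ae (integrable_const c) hf <| by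
      filter_upwards [measure_eq_zero_iff_ae_notMem.1 h0] with x hx using not_lt.1 hx

end Threshold

def IsBathtubMinimizer {α : Type*} [MeasurableSpace α] (μ : Measure α) (v f : Lp ℝ 2 μ) : Prop :=
  (∀ᵐ x ∂μ, 0 ≤ f x ∧ f x ≤ 1) ∧
    ∀ h : Lp ℝ 2 μ, (∀ᵐ x ∂μ, 0 ≤ h x ∧ h x ≤ 1) → ∫ x, h x ∂μ = ∫ x, f x ∂μ →
      ∫ x, f x * v x ∂μ ≤ ∫ x, h x * v x ∂μ

namespace IsBathtubMinimizer

variable {α : Type*} [MeasurableSpace α] {μ : Measure α} [IsFiniteMeasure μ] {v f : Lp ℝ 2 μ}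

theorem measure_eq_zero_or_of_le (hf : IsBathtubMinimizer μ v f) {a b ε : ℝ} (hab : a < b)
    (hε : 0 < ε) :
    μ {x | v x < a ∧ ε ≤ 1 - f x} = 0 ∨ μ {x | b < v x ∧ ε ≤ f x} = 0 := by
  by_contra! hAB
  set A := {x | v x < a ∧ ε ≤ 1 - f x}
  set B := {x | b < v x ∧ ε ≤ f x}
  have hv := (Lp.stronglyMeasurable v).measurable
  have hf' := (Lp.stronglyMeasurable f).measurable
  have hA : MeasurableSet A := (measurableSet_lt hv measurable_const).inter
    (measurableSet_le measurable_const (measurable_const.sub hf'))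
  have hB : MeasurableSet B :=
    (measurableSet_lt measurable_const hv).inter (measurableSet_le measurable_const hf')
  have hdisj : Disjoint A B :=
    disjoint_left.2 fun x hxA hxB => (hxA.1.trans (hab.trans hxB.1)).false
  set pA := μ.real A
  set pB := μ.real B
  have hpA : 0 < pA := ENNReal.toReal_pos hAB.1 (measure_ne_top μ A)
  have hpB : 0 < pB := ENNReal.toReal_pos hAB.2 (measure_ne_top μ B)
  -- Move mass `t * pA * pB` from `B`, where `v > b`, to `A`, where `v < a`.
  set t := ε / (pA + pB)
  have ht : 0 < t := by positivity
  have htA : t * pA ≤ ε := by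
    rw [div_mul_eq_mul_div, div_le_iff₀ (by positivity)]; nlinarith
  have htB : t * pB ≤ ε := by
    rw [div_mul_eq_mul_div, div_le_iff₀ (by positivity)]; nlinarith
  have hle := hf.2 _
    (ae_bounds_add_indicatorConstLp_sub_indicatorConstLp hA hB f (t * pB) (t * pA) hf.1
      (by positivity) (by positivity) hdisj (fun x hx => by linarith [hx.2])
      (fun x hx => htA.trans hx.2))
    (by rw [integral_add_indicatorConstLp_sub_indicatorConstLp]; ring)
  rw [integral_add_indicatorConstLp_sub_indicatorConstLp_mul] at hle
  have hvi : Integrable v μ := (Lp.memLp v).integrable (by norm_num)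
  have hIA : ∫ x in A, v x ∂μ ≤ a * pA := by
    simpa [mul_comm] using setIntegral_mono_on hvi.integrableOn
      (integrableOn_const (measure_ne_top μ A)) hA fun x hx => hx.1.le
  have hIB : b * pB ≤ ∫ x in B, v x ∂μ := by
    simpa [mul_comm] using setIntegral_mono_on (integrableOn_const (measure_ne_top μ B))
      hvi.integrableOn hB fun x hx => hx.1.le
  have hgain : 0 < t * pA * pB * (b - a) := by have := sub_pos.2 hab; positivity
  nlinarith [mul_le_mul_of_nonneg_left hIA (by positivity : 0 ≤ t * pB),
    mul_le_mul_of_nonneg_left hIB (by positivity : 0 ≤ t * pA)]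

theorem measure_eq_zero_or (hf : IsBathtubMinimizer μ v f) {a b : ℝ} (hab : a < b) :
    μ {x | v x < a ∧ f x < 1} = 0 ∨ μ {x | b < v x ∧ 0 < f x} = 0 := by
  by_contra! hAB
  obtain ⟨ε₁, hε₁, hA⟩ := exists_measure_setOf_and_le_ne_zero (g := fun x => 1 - f x)
    (by simpa only [sub_pos] using hAB.1)
  obtain ⟨ε₂, hε₂, hB⟩ := exists_measure_setOf_and_le_ne_zero hAB.2
  rcases hf.measure_eq_zero_or_of_le hab (lt_min hε₁ hε₂) with h | h
  · refine hA (measure_mono_null (fun x hx => ?_) h)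
    exact ⟨hx.1, (min_le_left _ _).trans hx.2⟩
  · refine hB (measure_mono_null (fun x hx => ?_) h)
    exact ⟨hx.1, (min_le_right _ _).trans hx.2⟩

theorem exists_threshold (hf : IsBathtubMinimizer μ v f) (hpos : 0 < ∫ x, f x ∂μ)
    (hlt : ∫ x, f x ∂μ < μ.real univ) :
    ∃ c : ℝ, ∀ᵐ x ∂μ, (v x < c → f x = 1) ∧ (c < v x → f x = 0) := by
  obtain ⟨c, hA, hB⟩ := exists_threshold_of_measure_eq_zero_or (fun _ _ => hf.measure_eq_zero_or)
    (measure_setOf_pos_ne_zero_of_integral_pos hpos)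
    (measure_setOf_lt_ne_zero_of_integral_lt ((Lp.memLp f).integrable (by norm_num))
      (by rwa [mul_one]))
  refine ⟨c, ?_⟩
  filter_upwards [hf.1, measure_eq_zero_iff_ae_notMem.1 hA, measure_eq_zero_iff_ae_notMem.1 hB]
    with x ⟨hf0, hf1⟩ hxA hxB
  exact ⟨fun hv => hf1.antisymm (not_lt.1 fun h => hxA ⟨hv, h⟩),
    fun hv => (not_lt.1 fun h => hxB ⟨hv, h⟩).antisymm hf0⟩

end IsBathtubMinimizer

theorem stmt_6_general (d : ℕ) (D : Set (EuclideanSpace ℝ (Fin d)))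
    (hDb : Bornology.IsBounded D)
    (v : Lp ℝ 2 (volume.restrict D))
    (c : ℝ) (hc0 : 0 < c) (hc1 : ENNReal.ofReal c < volume D)
    (S : Set (Lp ℝ 2 (volume.restrict D)))
    (hS : S = {h | (∀ᵐ x ∂(volume.restrict D), 0 ≤ h x ∧ h x ≤ 1) ∧
      ∫ x, h x ∂(volume.restrict D) = c})
    (fhat : Lp ℝ 2 (volume.restrict D)) (hfS : fhat ∈ S)
    (hmin : ∀ h ∈ S, ∫ x, fhat x * v x ∂(volume.restrict D) ≤
      ∫ x, h x * v x ∂(volume.restrict D)) :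
    ∃ α : ℝ, ∀ᵐ x ∂(volume.restrict D),
      (v x < α → fhat x = 1) ∧ (α < v x → fhat x = 0) := by
  have : IsFiniteMeasure (volume.restrict D) := isFiniteMeasure_restrict.2 hDb.measure_lt_top.ne
  subst hS
  obtain ⟨hf01, hfc⟩ := hfS
  refine IsBathtubMinimizer.exists_threshold
    ⟨hf01, fun h h01 hmass => hmin h ⟨h01, hmass.trans hfc⟩⟩ (hfc ▸ hc0) ?_
  rw [hfc, measureReal_restrict_apply_univ]
  exact (ENNReal.ofReal_lt_iff_lt_toReal hc0.le hDb.measure_lt_top.ne).1 hc1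

theorem stmt_6 (d : ℕ) (D : Set (EuclideanSpace ℝ (Fin d)))
    (hDo : IsOpen D) (hDb : Bornology.IsBounded D)
    (v : Lp ℝ 2 (volume.restrict D))
    (c : ℝ) (hc0 : 0 < c) (hc1 : ENNReal.ofReal c < volume D)
    (S : Set (Lp ℝ 2 (volume.restrict D)))
    (hS : S = {h | (∀ᵐ x ∂(volume.restrict D), 0 ≤ h x ∧ h x ≤ 1) ∧
      ∫ x, h x ∂(volume.restrict D) = c})
    (fhat : Lp ℝ 2 (volume.restrict D)) (hfS : fhat ∈ S)
    (hmin : ∀ h ∈ S, ∫ x, fhat x * v x ∂(volume.restrict D) ≤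
      ∫ x, h x * v x ∂(volume.restrict D)) :
    ∃ α : ℝ, ∀ᵐ x ∂(volume.restrict D),
      (v x < α → fhat x = 1) ∧ (α < v x → fhat x = 0) :=
  stmt_6_general d D hDb v c hc0 hc1 S hS fhat hfS hmin
end

section
/- Let D ⊆ ℝ^d be a bounded open set, let Ω = D × (0,1) ⊆ ℝ^d × ℝ, and let u be continuous on the closure of Ω, twice continuously differentiable on Ω, with Δu(x',t) = −f(x') for all (x',t) ∈ Ω for some function f : D → ℝ, and u = 0 on the topological boundary ∂Ω. Then u(x',t) = u(x',1−t) for every (x',t) in the closure of Ω. Consequently, if in addition u is continuously differentiable up to D × {0} and D × {1}, then ∂_t u(x',0) = −∂_t u(x',1) for every x' ∈ D. -/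
/-!
The reflection `(x', t) ↦ (x', 1 - t)` maps the cylinder `Ω` to itself, commutes with the
Laplacian and fixes the right-hand side `f(x')`, so `u` and `(x', t) ↦ u (x', 1 - t)` solve the
same Dirichlet problem and agree by uniqueness. Uniqueness is the weak maximum principle: if
`Δg ≥ 0` in `Ω`, then `Δ(g + ε t²) > 0` rules out an interior maximum of `g + ε t²`, hence
`g ≤ ε · sup_Ω t²` in `Ω` when `g ≤ 0` on `∂Ω`, for every `ε > 0`. The relation between the
normal derivatives is then the chain rule for `t ↦ 1 - t`.
-/

open MeasureTheory

/-- Second directional derivative of `f` at `x` in the direction `w` (twice). -/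
noncomputable def pderiv2 {E : Type*} [NormedAddCommGroup E] [NormedSpace ℝ E]
    (f : E → ℝ) (x w : E) : ℝ :=
  fderiv ℝ (fun y => fderiv ℝ f y w) x w

/-- The `i`-th horizontal unit vector of `ℝ^d × ℝ`. -/
noncomputable def eI (d : ℕ) (i : Fin d) : (Fin d → ℝ) × ℝ := (Pi.single i 1, 0)

/-- The vertical unit vector of `ℝ^d × ℝ`. -/
noncomputable def eT (d : ℕ) : (Fin d → ℝ) × ℝ := (0, 1)

open Filter Set Topology

lemma deriv_deriv_nonpos_of_isLocalMax {ψ : ℝ → ℝ} {t₀ : ℝ} (hmax : IsLocalMax ψ t₀)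
    (hc : ContinuousAt ψ t₀) : deriv (deriv ψ) t₀ ≤ 0 := by
  by_contra! hpos
  have hmin : IsLocalMin ψ t₀ := isLocalMin_of_deriv_deriv_pos hpos hmax.deriv_eq_zero hc
  have hconst : ψ =ᶠ[𝓝 t₀] fun _ => ψ t₀ :=
    (hmin.and hmax).mono fun t ht => le_antisymm ht.2 ht.1
  rw [hconst.deriv.deriv_eq] at hpos
  simp at hpos

section pderiv2

variable {E F : Type*} [NormedAddCommGroup E] [NormedSpace ℝ E]
  [NormedAddCommGroup F] [NormedSpace ℝ F] {g h : E → ℝ} {x : E}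

theorem ContDiffAt.eventually_differentiableAt (hg : ContDiffAt ℝ 2 g x) :
    ∀ᶠ y in 𝓝 x, DifferentiableAt ℝ g y :=
  (hg.eventually (by simp)).mono fun _ hy => hy.differentiableAt (by simp)

theorem ContDiffAt.differentiableAt_fderiv_apply (hg : ContDiffAt ℝ 2 g x) (v : E) :
    DifferentiableAt ℝ (fun y => fderiv ℝ g y v) x :=
  ((hg.fderiv_right le_rfl).clm_apply contDiffAt_const).differentiableAt one_ne_zero

lemma pderiv2_add (hg : ContDiffAt ℝ 2 g x) (hh : ContDiffAt ℝ 2 h x) (v : E) :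
    pderiv2 (fun y => g y + h y) x v = pderiv2 g x v + pderiv2 h x v := by
  have hfd : (fun y => fderiv ℝ (fun y => g y + h y) y v) =ᶠ[𝓝 x]
      fun y => fderiv ℝ g y v + fderiv ℝ h y v := by
    filter_upwards [hg.eventually_differentiableAt, hh.eventually_differentiableAt] with y hgy hhy
    rw [fderiv_fun_add hgy hhy]
    rfl
  rw [pderiv2, hfd.fderiv_eq, fderiv_fun_add (hg.differentiableAt_fderiv_apply v)
    (hh.differentiableAt_fderiv_apply v)]
  rfl

lemma pderiv2_sub (hg : ContDiffAt ℝ 2 g x) (hh : ContDiffAt ℝ 2 h x) (v : E) :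
    pderiv2 (fun y => g y - h y) x v = pderiv2 g x v - pderiv2 h x v := by
  have hfd : (fun y => fderiv ℝ (fun y => g y - h y) y v) =ᶠ[𝓝 x]
      fun y => fderiv ℝ g y v - fderiv ℝ h y v := by
    filter_upwards [hg.eventually_differentiableAt, hh.eventually_differentiableAt] with y hgy hhy
    rw [fderiv_fun_sub hgy hhy]
    rfl
  rw [pderiv2, hfd.fderiv_eq, fderiv_fun_sub (hg.differentiableAt_fderiv_apply v)
    (hh.differentiableAt_fderiv_apply v)]
  rfl

lemma pderiv2_neg_direction (g : E → ℝ) (x v : E) : pderiv2 g x (-v) = pderiv2 g x v := by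
  simp only [pderiv2, map_neg, fderiv_fun_neg, neg_apply, neg_neg]

lemma pderiv2_comp_of_hasFDerivAt {σ : E → F} {L : E →L[ℝ] F} (hσ : ∀ y, HasFDerivAt σ L y)
    {g : F → ℝ} (hg : ContDiffAt ℝ 2 g (σ x)) (v : E) :
    pderiv2 (fun y => g (σ y)) x v = pderiv2 g (σ x) (L v) := by
  have hfd : (fun y => fderiv ℝ (fun y => g (σ y)) y v) =ᶠ[𝓝 x]
      fun y => fderiv ℝ g (σ y) (L v) := by
    filter_upwards [(hσ x).continuousAt.eventually hg.eventually_differentiableAt] with y hy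
    change fderiv ℝ (g ∘ σ) y v = _
    rw [(hy.hasFDerivAt.comp y (hσ y)).fderiv]
    rfl
  have hG : HasFDerivAt (fun y => fderiv ℝ g (σ y) (L v))
      ((fderiv ℝ (fun z => fderiv ℝ g z (L v)) (σ x)).comp L) x :=
    (hg.differentiableAt_fderiv_apply (L v)).hasFDerivAt.comp x (hσ x)
  rw [pderiv2, hfd.fderiv_eq, hG.fderiv]
  rfl

lemma pderiv2_eq_deriv_deriv (hg : ContDiffAt ℝ 2 g x) (v : E) :
    pderiv2 g x v = deriv (deriv fun t : ℝ => g (x + t • v)) 0 := by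
  have hline : ∀ t : ℝ, HasDerivAt (fun s : ℝ => x + s • v) v t := fun t => by
    simpa using ((hasDerivAt_id t).smul_const v).const_add x
  have hline0 : ∀ᶠ t in 𝓝 (0 : ℝ), DifferentiableAt ℝ g (x + t • v) :=
    (hline 0).continuousAt.eventually (by simpa using hg.eventually_differentiableAt)
  have hfd : deriv (fun t : ℝ => g (x + t • v)) =ᶠ[𝓝 0] fun t => fderiv ℝ g (x + t • v) v :=
    hline0.mono fun t ht => (ht.hasFDerivAt.comp_hasDerivAt t (hline t)).deriv
  have hG : HasDerivAt (fun t : ℝ => fderiv ℝ g (x + t • v) v) (pderiv2 g x v) 0 := by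
    have h2 : HasFDerivAt (fun y => fderiv ℝ g y v) (fderiv ℝ (fun y => fderiv ℝ g y v) x)
        (x + (0 : ℝ) • v) := by
      simpa using (hg.differentiableAt_fderiv_apply v).hasFDerivAt
    simpa [Function.comp_def, pderiv2] using h2.comp_hasDerivAt 0 (hline 0)
  exact (hG.congr_of_eventuallyEq hfd).deriv.symm

lemma pderiv2_nonpos_of_isLocalMax (hg : ContDiffAt ℝ 2 g x) (hmax : IsLocalMax g x) (v : E) :
    pderiv2 g x v ≤ 0 := by
  have hline : ContinuousAt (fun t : ℝ => x + t • v) 0 := by fun_prop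
  have hx : x + (0 : ℝ) • v = x := by simp
  rw [pderiv2_eq_deriv_deriv hg v]
  refine deriv_deriv_nonpos_of_isLocalMax ?_ ?_
  · exact IsLocalMax.comp_continuous (g := fun t : ℝ => x + t • v) (by rwa [hx]) hline
  · exact ContinuousAt.comp (g := g) (by rw [hx]; exact hg.continuousAt) hline

lemma pderiv2_const_mul_snd_sq (ε : ℝ) (x v : E × ℝ) :
    pderiv2 (fun y : E × ℝ => ε * y.2 ^ 2) x v = 2 * ε * v.2 ^ 2 := by
  have hfd : (fun y => fderiv ℝ (fun y : E × ℝ => ε * y.2 ^ 2) y v) =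
      fun y => 2 * ε * v.2 * y.2 := by
    ext y
    rw [(((hasFDerivAt_snd (p := y)).pow 2).const_mul ε).fderiv]
    simp only [Nat.add_one_sub_one, pow_one, nsmul_eq_mul, Nat.cast_ofNat, smul_apply,
      ContinuousLinearMap.coe_snd', smul_eq_mul]
    ring
  rw [pderiv2, hfd, ((hasFDerivAt_snd (p := x)).const_mul (2 * ε * v.2)).fderiv]
  simp only [smul_apply, ContinuousLinearMap.coe_snd', smul_eq_mul]
  ring

end pderiv2

noncomputable def reflectSnd {E : Type*} [TopologicalSpace E] (c : ℝ) : E × ℝ ≃ₜ E × ℝ :=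
  (Homeomorph.refl E).prodCongr (Homeomorph.subLeft c)

@[simp]
lemma reflectSnd_apply {E : Type*} [TopologicalSpace E] (c : ℝ) (y : E × ℝ) :
    reflectSnd c y = (y.1, c - y.2) :=
  rfl

lemma contDiff_reflectSnd {E : Type*} [NormedAddCommGroup E] [NormedSpace ℝ E] (c : ℝ)
    {n : WithTop ℕ∞} : ContDiff ℝ n (reflectSnd (E := E) c) :=
  contDiff_fst.prodMk (contDiff_const.sub contDiff_snd)

section laplacian

variable {d : ℕ}

noncomputable def laplacian (u : (Fin d → ℝ) × ℝ → ℝ) (x : (Fin d → ℝ) × ℝ) : ℝ :=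
  ∑ i, pderiv2 u x (eI d i) + pderiv2 u x (eT d)

variable {g h : (Fin d → ℝ) × ℝ → ℝ} {x : (Fin d → ℝ) × ℝ} {Ω : Set ((Fin d → ℝ) × ℝ)}

lemma laplacian_add (hg : ContDiffAt ℝ 2 g x) (hh : ContDiffAt ℝ 2 h x) :
    laplacian (fun y => g y + h y) x = laplacian g x + laplacian h x := by
  simp only [laplacian, pderiv2_add hg hh, Finset.sum_add_distrib]
  ring

lemma laplacian_sub (hg : ContDiffAt ℝ 2 g x) (hh : ContDiffAt ℝ 2 h x) :
    laplacian (fun y => g y - h y) x = laplacian g x - laplacian h x := by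
  simp only [laplacian, pderiv2_sub hg hh, Finset.sum_sub_distrib]
  ring

lemma laplacian_const_mul_snd_sq (ε : ℝ) (x : (Fin d → ℝ) × ℝ) :
    laplacian (fun y : (Fin d → ℝ) × ℝ => ε * y.2 ^ 2) x = 2 * ε := by
  simp [laplacian, pderiv2_const_mul_snd_sq, eI, eT]

lemma laplacian_nonpos_of_isLocalMax (hg : ContDiffAt ℝ 2 g x) (hmax : IsLocalMax g x) :
    laplacian g x ≤ 0 :=
  add_nonpos (Finset.sum_nonpos fun _ _ => pderiv2_nonpos_of_isLocalMax hg hmax _)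
    (pderiv2_nonpos_of_isLocalMax hg hmax _)

lemma laplacian_comp_reflectSnd (c : ℝ) (hg : ContDiffAt ℝ 2 g (reflectSnd c x)) :
    laplacian (fun y => g (reflectSnd c y)) x = laplacian g (reflectSnd c x) := by
  set L := (ContinuousLinearMap.fst ℝ (Fin d → ℝ) ℝ).prod (-ContinuousLinearMap.snd ℝ _ ℝ)
  have hσ : ∀ y, HasFDerivAt (reflectSnd c) L y := fun y =>
    hasFDerivAt_fst.prodMk (hasFDerivAt_snd.const_sub c)
  have hI : ∀ i, L (eI d i) = eI d i := fun i => by simp [L, eI]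
  have hT : L (eT d) = -eT d := by simp [L, eT]
  simp only [laplacian, pderiv2_comp_of_hasFDerivAt hσ hg, hI, hT, pderiv2_neg_direction]

lemma exists_isMaxOn_frontier_of_laplacian_pos (hΩo : IsOpen Ω) (hΩc : IsCompact (closure Ω))
    (hne : (closure Ω).Nonempty) (hc : ContinuousOn h (closure Ω)) (hh : ContDiffOn ℝ 2 h Ω)
    (hlap : ∀ x ∈ Ω, 0 < laplacian h x) : ∃ x₀ ∈ frontier Ω, IsMaxOn h (closure Ω) x₀ := by
  obtain ⟨x₀, hx₀, hmax⟩ := hΩc.exists_isMaxOn hne hc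
  refine ⟨x₀, ⟨hx₀, fun hint => ?_⟩, hmax⟩
  rw [hΩo.interior_eq] at hint
  have hloc : IsLocalMax h x₀ :=
    hmax.isLocalMax (mem_of_superset (hΩo.mem_nhds hint) subset_closure)
  exact (hlap x₀ hint).not_ge
    (laplacian_nonpos_of_isLocalMax (hh.contDiffAt (hΩo.mem_nhds hint)) hloc)

theorem nonpos_of_laplacian_nonneg (hΩo : IsOpen Ω) (hΩc : IsCompact (closure Ω))
    (hc : ContinuousOn g (closure Ω)) (hg : ContDiffOn ℝ 2 g Ω)
    (hlap : ∀ x ∈ Ω, 0 ≤ laplacian g x) (hbd : ∀ x ∈ frontier Ω, g x ≤ 0) :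
    ∀ x ∈ closure Ω, g x ≤ 0 := by
  intro x hx
  obtain ⟨M, hM⟩ := hΩc.bddAbove_image (f := fun y => y.2 ^ 2) (by fun_prop)
  have hbound : ∀ ε > 0, g x ≤ ε * M := by
    intro ε hε
    have hq : ContDiff ℝ 2 fun y : (Fin d → ℝ) × ℝ => ε * y.2 ^ 2 := by fun_prop
    obtain ⟨x₀, hx₀, hmax⟩ := exists_isMaxOn_frontier_of_laplacian_pos
      (h := fun y => g y + ε * y.2 ^ 2) hΩo hΩc ⟨x, hx⟩ (hc.add hq.continuous.continuousOn)
      (hg.add hq.contDiffOn) fun y hy => by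
        rw [laplacian_add (hg.contDiffAt (hΩo.mem_nhds hy)) hq.contDiffAt,
          laplacian_const_mul_snd_sq]
        linarith [hlap y hy]
    calc g x ≤ g x + ε * x.2 ^ 2 := le_add_of_nonneg_right (by positivity)
      _ ≤ g x₀ + ε * x₀.2 ^ 2 := hmax hx
      _ ≤ 0 + ε * M := add_le_add (hbd x₀ hx₀)
          (mul_le_mul_of_nonneg_left (hM (mem_image_of_mem _ hx₀.1)) hε.le)
      _ = ε * M := zero_add _
  have hlim : Tendsto (fun ε => ε * M) (𝓝[>] 0) (𝓝 0) :=
    ((continuous_mul_const M).tendsto' 0 0 (zero_mul M)).mono_left nhdsWithin_le_nhds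
  exact ge_of_tendsto hlim (eventually_nhdsWithin_of_forall hbound)

theorem le_on_closure_of_laplacian_ge (hΩo : IsOpen Ω) (hΩc : IsCompact (closure Ω))
    (hgc : ContinuousOn g (closure Ω)) (hhc : ContinuousOn h (closure Ω))
    (hg : ContDiffOn ℝ 2 g Ω) (hh : ContDiffOn ℝ 2 h Ω)
    (hlap : ∀ x ∈ Ω, laplacian h x ≤ laplacian g x) (hbd : ∀ x ∈ frontier Ω, g x ≤ h x) :
    ∀ x ∈ closure Ω, g x ≤ h x := by
  have hdiff := nonpos_of_laplacian_nonneg (g := fun y => g y - h y) hΩo hΩc (hgc.sub hhc)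
    (hg.sub hh) (fun x hx => by
      rw [laplacian_sub (hg.contDiffAt (hΩo.mem_nhds hx)) (hh.contDiffAt (hΩo.mem_nhds hx))]
      linarith [hlap x hx])
    (fun x hx => by linarith [hbd x hx])
  exact fun x hx => by linarith [hdiff x hx]

theorem eqOn_closure_of_laplacian_eq (hΩo : IsOpen Ω) (hΩc : IsCompact (closure Ω))
    (hgc : ContinuousOn g (closure Ω)) (hhc : ContinuousOn h (closure Ω))
    (hg : ContDiffOn ℝ 2 g Ω) (hh : ContDiffOn ℝ 2 h Ω)
    (hlap : ∀ x ∈ Ω, laplacian g x = laplacian h x) (hbd : EqOn g h (frontier Ω)) :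
    EqOn g h (closure Ω) := fun x hx =>
  le_antisymm
    (le_on_closure_of_laplacian_ge hΩo hΩc hgc hhc hg hh (fun y hy => (hlap y hy).ge)
      (fun _ hy => (hbd hy).le) x hx)
    (le_on_closure_of_laplacian_ge hΩo hΩc hhc hgc hh hg (fun y hy => (hlap y hy).le)
      (fun _ hy => (hbd hy).ge) x hx)

end laplacian

lemma hasDerivWithinAt_Icc_reflect {g : ℝ → ℝ} {a b c x : ℝ}
    (hsym : ∀ t ∈ Icc a b, g (a + b - t) = g t) (hx : x ∈ Icc a b)
    (h : HasDerivWithinAt g c (Icc a b) x) : HasDerivWithinAt g (-c) (Icc a b) (a + b - x) := by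
  have hr : HasDerivWithinAt (fun t => a + b - t) (-1) (Icc a b) (a + b - x) := by
    simpa using (hasDerivWithinAt_id (a + b - x) (Icc a b)).const_sub (a + b)
  have hmaps : MapsTo (fun t => a + b - t) (Icc a b) (Icc a b) := fun t ht =>
    ⟨by linarith [ht.2], by linarith [ht.1]⟩
  have h' : HasDerivWithinAt g c (Icc a b) (a + b - (a + b - x)) := by simpa using h
  simpa using (h'.comp (a + b - x) hr hmaps).congr_of_mem (fun t ht => (hsym t ht).symm)
    (hmaps hx)

lemma derivWithin_Icc_left_eq_neg_right {g : ℝ → ℝ} {a b : ℝ} (hab : a < b)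
    (hsym : ∀ t ∈ Icc a b, g (a + b - t) = g t) :
    derivWithin g (Icc a b) a = -derivWithin g (Icc a b) b := by
  by_cases hb : DifferentiableWithinAt ℝ g (Icc a b) b
  · have ha := hasDerivWithinAt_Icc_reflect hsym (right_mem_Icc.2 hab.le) hb.hasDerivWithinAt
    rw [add_sub_cancel_right] at ha
    exact ha.derivWithin (uniqueDiffOn_Icc hab a (left_mem_Icc.2 hab.le))
  · -- by symmetry `g` is not differentiable at `a` either, so both sides are junk zeros
    have ha : ¬DifferentiableWithinAt ℝ g (Icc a b) a := fun ha => hb <| by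
      simpa using (hasDerivWithinAt_Icc_reflect hsym (left_mem_Icc.2 hab.le)
        ha.hasDerivWithinAt).differentiableWithinAt
    rw [derivWithin_zero_of_not_differentiableWithinAt ha,
      derivWithin_zero_of_not_differentiableWithinAt hb, neg_zero]

theorem stmt_8 (d : ℕ) (D : Set (Fin d → ℝ)) (hDo : IsOpen D) (hDb : Bornology.IsBounded D)
    (u : (Fin d → ℝ) × ℝ → ℝ) (f : (Fin d → ℝ) → ℝ)
    (Ω : Set ((Fin d → ℝ) × ℝ)) (hΩ : Ω = D ×ˢ Set.Ioo 0 1)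
    (hc : ContinuousOn u (closure Ω))
    (hu : ContDiffOn ℝ 2 u Ω)
    (heq : ∀ x ∈ Ω, (∑ i, pderiv2 u x (eI d i)) + pderiv2 u x (eT d) = - f x.1)
    (hbd : ∀ x ∈ frontier Ω, u x = 0) :
    (∀ x ∈ closure Ω, u x = u (x.1, 1 - x.2)) ∧
    ((∀ x' ∈ D, ContDiffOn ℝ 1 (fun t => u (x', t)) (Set.Icc 0 1)) →
      ∀ x' ∈ D, derivWithin (fun t => u (x', t)) (Set.Icc 0 1) 0 =
        - derivWithin (fun t => u (x', t)) (Set.Icc 0 1) 1) := by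
  have hΩo : IsOpen Ω := hΩ ▸ hDo.prod isOpen_Ioo
  have hΩc : IsCompact (closure Ω) :=
    (hΩ ▸ hDb.prod (Metric.isBounded_Ioo 0 1)).isCompact_closure
  set σ : (Fin d → ℝ) × ℝ ≃ₜ (Fin d → ℝ) × ℝ := reflectSnd 1
  have hσΩ : σ ⁻¹' Ω = Ω := by
    ext ⟨x', t⟩
    simp only [hΩ, σ, mem_preimage, reflectSnd_apply, mem_prod, mem_Ioo]
    constructor <;> rintro ⟨hx', ht₀, ht₁⟩ <;> exact ⟨hx', by linarith, by linarith⟩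
  have hσcl : σ ⁻¹' closure Ω = closure Ω := by rw [σ.preimage_closure, hσΩ]
  have hσfr : σ ⁻¹' frontier Ω = frontier Ω := by rw [σ.preimage_frontier, hσΩ]
  have hsymm : EqOn u (fun y => u (σ y)) (closure Ω) := by
    refine eqOn_closure_of_laplacian_eq hΩo hΩc hc
      (hc.comp σ.continuous.continuousOn hσcl.symm.subset) hu
      (hu.comp (contDiff_reflectSnd 1).contDiffOn hσΩ.symm.subset) (fun x hx => ?_)
      (fun x hx => ?_)
    · rw [laplacian_comp_reflectSnd 1 (hu.contDiffAt (hΩo.mem_nhds (hσΩ.symm.subset hx)))]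
      exact (heq x hx).trans (heq (σ x) (hσΩ.symm.subset hx)).symm
    · simp only [hbd x hx, hbd (σ x) (hσfr.symm.subset hx)]
  refine ⟨fun x hx => by simpa [σ] using hsymm hx, fun _ x' hx' => ?_⟩
  refine derivWithin_Icc_left_eq_neg_right zero_lt_one fun t ht => ?_
  have hmem : (x', t) ∈ closure Ω := by
    rw [hΩ, closure_prod_eq, closure_Ioo zero_ne_one]
    exact ⟨subset_closure hx', ht⟩
  simpa [σ] using (hsymm hmem).symm
end
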